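/- (Solution-set characterization of the compilation.) A plan π solves the compiled problem P_mod if and only if π solves both the robot's problem P_R and the human's problem P_H; in other words, the set of solutions of P_mod equals the intersection of the sets of solutions of P_R and of P_H. -/
import Mathlib


/-- A STRIPS planning problem over fluents `F` and actions `A`. -/
structure Problem (F : Type) (A : Type) where
  pre : A → Set F
  add : A → Set F
  del : A → Set F
  I : Set F
  G : Set F

/-- Applying action `a` in state `s`. -/
def applyAct {F A : Type} (P : Problem F A) (s : Set F) (a : A) : Set F :=
  (s ∪ P.add a) \ P.del a

/-- A plan is executable from a state iff each action's precondition holds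
in the state obtained by applying the preceding actions. -/
def Executable {F A : Type} (P : Problem F A) : Set F → List A → Prop
  | _, [] => True
  | s, a :: rest => P.pre a ⊆ s ∧ Executable P (applyAct P s a) rest

/-- The resulting state of a plan from a state. -/
def result {F A : Type} (P : Problem F A) : Set F → List A → Set F
  | s, [] => s
  | s, a :: rest => result P (applyAct P s a) rest

/-- A plan solves a problem iff it is executable from the initial state and
its resulting state contains the goal. -/
def Solves {F A : Type} (P : Problem F A) (π : List A) : Prop :=
  Executable P P.I π ∧ P.G ⊆ result P P.I π

/-- Tagged union of two states: `s_R ⊎ s_H ⊆ F ⊕ F`. -/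
def tagUnion {F : Type} (sR sH : Set F) : Set (F ⊕ F) :=
  Sum.inl '' sR ∪ Sum.inr '' sH

/-- The compiled problem `P_mod` over `F ⊕ F`. -/
def compiled {F A : Type} (PR PH : Problem F A) : Problem (F ⊕ F) A where
  pre a := tagUnion (PR.pre a) (PH.pre a)
  add a := tagUnion (PR.add a) (PH.add a)
  del a := tagUnion (PR.del a) (PH.del a)
  I := tagUnion PR.I PH.I
  G := tagUnion PR.G PH.G


lemma mem_tagUnion_inl {F : Type} (sR sH : Set F) (x : F) :
    Sum.inl x ∈ tagUnion sR sH ↔ x ∈ sR := by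
  simp [tagUnion]

lemma mem_tagUnion_inr {F : Type} (sR sH : Set F) (x : F) :
    Sum.inr x ∈ tagUnion sR sH ↔ x ∈ sH := by
  simp [tagUnion]

lemma tagUnion_subset_iff {F : Type} (sR sH tR tH : Set F) :
    tagUnion sR sH ⊆ tagUnion tR tH ↔ sR ⊆ tR ∧ sH ⊆ tH := by
  constructor
  · intro h
    constructor
    · intro x hx
      have := h (by simpa [mem_tagUnion_inl] using hx : (Sum.inl x : F ⊕ F) ∈ tagUnion sR sH)
      simpa [mem_tagUnion_inl] using this
    · intro x hx
      have := h (by simpa [mem_tagUnion_inr] using hx : (Sum.inr x : F ⊕ F) ∈ tagUnion sR sH)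
      simpa [mem_tagUnion_inr] using this
  · rintro ⟨h1, h2⟩ x hx
    rcases x with x | x
    · simpa [mem_tagUnion_inl] using h1 (by simpa [mem_tagUnion_inl] using hx)
    · simpa [mem_tagUnion_inr] using h2 (by simpa [mem_tagUnion_inr] using hx)

lemma applyAct_compiled {F A : Type} (PR PH : Problem F A) (sR sH : Set F) (a : A) :
    applyAct (compiled PR PH) (tagUnion sR sH) a
      = tagUnion (applyAct PR sR a) (applyAct PH sH a) := by
  ext x
  rcases x with x | x <;>
    simp [applyAct, compiled, tagUnion]

lemma result_compiled {F A : Type} (PR PH : Problem F A) (π : List A) :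
    ∀ sR sH, result (compiled PR PH) (tagUnion sR sH) π
      = tagUnion (result PR sR π) (result PH sH π) := by
  induction π with
  | nil => intro sR sH; rfl
  | cons a rest ih =>
      intro sR sH
      simp only [result, applyAct_compiled]
      exact ih _ _

lemma executable_compiled {F A : Type} (PR PH : Problem F A) (π : List A) :
    ∀ sR sH, Executable (compiled PR PH) (tagUnion sR sH) π
      ↔ Executable PR sR π ∧ Executable PH sH π := by
  induction π with
  | nil => intro sR sH; simp [Executable]
  | cons a rest ih =>
      intro sR sH
      simp only [Executable, applyAct_compiled, ih, tagUnion_subset_iff]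
      show (tagUnion (PR.pre a) (PH.pre a) ⊆ tagUnion sR sH) ∧ _ ↔ _
      rw [tagUnion_subset_iff]
      tauto

theorem stmt_5 {F A : Type} (PR PH : Problem F A) :
    (∀ π : List A, Solves (compiled PR PH) π ↔ Solves PR π ∧ Solves PH π) ∧
    {π : List A | Solves (compiled PR PH) π} =
      {π : List A | Solves PR π} ∩ {π : List A | Solves PH π} := by
  have key : ∀ π : List A, Solves (compiled PR PH) π ↔ Solves PR π ∧ Solves PH π := by
    intro π
    show (Executable (compiled PR PH) (tagUnion PR.I PH.I) π ∧
        tagUnion PR.G PH.G ⊆ result (compiled PR PH) (tagUnion PR.I PH.I) π) ↔ _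
    rw [executable_compiled, result_compiled, tagUnion_subset_iff]
    unfold Solves
    tauto
  refine ⟨key, ?_⟩
  ext π
  simp [key π, Set.mem_inter_iff]
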